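/- For 0 ≤ s ≤ t and u ∈ ℝ³ let b_t(s,u) = ∫₀^{t−s} (4πr)^{-3/2} e^{-‖u‖²/(4r)} dr, and set b_t(s,u) = 0 for s > t. Then for every t > 0 and T ≥ t, the function (s,u) ↦ b_t(s,u) is square-integrable on [0,T] × ℝ³; in particular ∫₀^t ∫_{ℝ³} b_t(s,u)² du ds < ∞. -/

import Mathlib

/-!
For `r ≤ t`, split `e^{-‖u‖²/(4r)} = e^{-‖u‖²/(8r)} · e^{-‖u‖²/(8r)}`, bound the first factor by
`(‖u‖²/(8r))^{-2/3}` and the second by `e^{-‖u‖²/(8t)}`. This gives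
`(4πr)^{-3/2} e^{-‖u‖²/(4r)} ≲ r^{-5/6} ‖u‖^{-4/3} e^{-‖u‖²/(8t)}`, and since `r^{-5/6}` is
integrable at `0`, `b_t(s, ·)` is dominated, uniformly in `s ≥ 0`, by a multiple of
`‖u‖^{-4/3} e^{-‖u‖²/(8t)}`. Its square is integrable on `ℝ³` because `8/3 < 3`, and the time
variable ranges over a set of finite measure.
-/

open Real MeasureTheory

/-- `b_t(s,u) = ∫₀^{t-s} (4πr)^{-3/2} e^{-‖u‖²/(4r)} dr` (equal to `0` when `s > t`). -/
noncomputable def bker (t s : ℝ) (u : EuclideanSpace ℝ (Fin 3)) : ℝ :=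
  ∫ r in Set.Ioc (0 : ℝ) (t - s), (4 * π * r) ^ (-(3 : ℝ) / 2) * Real.exp (-‖u‖ ^ 2 / (4 * r))

theorem integrable_norm_rpow_mul_exp_neg_mul_sq {E : Type*} [NormedAddCommGroup E]
    [NormedSpace ℝ E] [Nontrivial E] [FiniteDimensional ℝ E] [MeasurableSpace E] [BorelSpace E]
    (μ : Measure E) [μ.IsAddHaarMeasure] {b p : ℝ} (hb : 0 < b)
    (hp : -(Module.finrank ℝ E : ℝ) < p) :
    Integrable (fun x : E => ‖x‖ ^ p * exp (-b * ‖x‖ ^ 2)) μ := by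
  rw [integrable_fun_norm_addHaar μ (f := fun y => y ^ p * exp (-b * y ^ 2))]
  have hd : 1 ≤ Module.finrank ℝ E := Module.finrank_pos
  refine (integrableOn_rpow_mul_exp_neg_mul_sq hb (s := ((Module.finrank ℝ E - 1 : ℕ) : ℝ) + p)
    (by push_cast [hd]; linarith)).congr_fun (fun y hy => ?_) measurableSet_Ioi
  dsimp only
  rw [smul_eq_mul, rpow_add hy, rpow_natCast, mul_assoc]

theorem exp_neg_le_rpow_neg_two_thirds {x : ℝ} (hx : 0 < x) : exp (-x) ≤ x ^ (-(2 : ℝ) / 3) := by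
  have h : x ^ ((2 : ℝ) / 3) ≤ exp x := by
    rcases le_total x 1 with h1 | h1
    · exact (rpow_le_one hx.le h1 (by norm_num)).trans (one_le_exp hx.le)
    · calc x ^ ((2 : ℝ) / 3) ≤ x ^ (1 : ℝ) := rpow_le_rpow_of_exponent_le h1 (by norm_num)
        _ ≤ exp x := by rw [rpow_one]; linarith [add_one_le_exp x]
  rw [exp_neg, neg_div, rpow_neg hx.le]
  exact inv_anti₀ (by positivity) h

theorem rpow_mul_sq_div_rpow {r x : ℝ} (hr : 0 < r) (hx : 0 < x) :
    r ^ (-(3 : ℝ) / 2) * (x ^ 2 / (8 * r)) ^ (-(2 : ℝ) / 3) =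
      8 ^ ((2 : ℝ) / 3) * r ^ (-(5 : ℝ) / 6) * x ^ (-(4 : ℝ) / 3) := by
  have hsplit : (x ^ 2 / (8 * r)) ^ (-(2 : ℝ) / 3) =
      x ^ (-(4 : ℝ) / 3) * 8 ^ ((2 : ℝ) / 3) * r ^ ((2 : ℝ) / 3) := by
    rw [div_rpow (by positivity) (by positivity), ← rpow_natCast, ← rpow_mul hx.le, neg_div,
      rpow_neg (by positivity), mul_rpow (by norm_num) hr.le]
    field_simp
    norm_num
  rw [hsplit, show (-(5 : ℝ) / 6) = -(3 : ℝ) / 2 + 2 / 3 by norm_num, rpow_add hr]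
  ring

local notation "ℝ³" => EuclideanSpace ℝ (Fin 3)

noncomputable def heatKernel (r : ℝ) (u : ℝ³) : ℝ :=
  (4 * π * r) ^ (-(3 : ℝ) / 2) * exp (-‖u‖ ^ 2 / (4 * r))

noncomputable def heatMajorant (t : ℝ) (u : ℝ³) : ℝ :=
  ‖u‖ ^ (-(4 : ℝ) / 3) * exp (-‖u‖ ^ 2 / (8 * t))

theorem heatKernel_nonneg {r : ℝ} (hr : 0 ≤ r) (u : ℝ³) : 0 ≤ heatKernel r u := by
  unfold heatKernel; positivity

theorem heatMajorant_nonneg (t : ℝ) (u : ℝ³) : 0 ≤ heatMajorant t u := by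
  unfold heatMajorant; positivity

theorem heatKernel_le {r t : ℝ} (hr : 0 < r) (hrt : r ≤ t) {u : ℝ³} (hu : u ≠ 0) :
    heatKernel r u ≤
      (4 * π) ^ (-(3 : ℝ) / 2) * 8 ^ ((2 : ℝ) / 3) * r ^ (-(5 : ℝ) / 6) * heatMajorant t u := by
  have hnorm : 0 < ‖u‖ := norm_pos_iff.mpr hu
  have hhalf : -‖u‖ ^ 2 / (4 * r) = -(‖u‖ ^ 2 / (8 * r)) + -‖u‖ ^ 2 / (8 * r) := by
    field_simp; ring
  have hdecay : exp (-‖u‖ ^ 2 / (8 * r)) ≤ exp (-‖u‖ ^ 2 / (8 * t)) := by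
    rw [neg_div, neg_div]
    gcongr
  calc heatKernel r u
      = (4 * π) ^ (-(3 : ℝ) / 2) * r ^ (-(3 : ℝ) / 2) *
          (exp (-(‖u‖ ^ 2 / (8 * r))) * exp (-‖u‖ ^ 2 / (8 * r))) := by
        rw [heatKernel, mul_rpow (by positivity) hr.le, hhalf, exp_add]
    _ ≤ (4 * π) ^ (-(3 : ℝ) / 2) * r ^ (-(3 : ℝ) / 2) *
          ((‖u‖ ^ 2 / (8 * r)) ^ (-(2 : ℝ) / 3) * exp (-‖u‖ ^ 2 / (8 * t))) := by
        gcongr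
        exact exp_neg_le_rpow_neg_two_thirds (by positivity)
    _ = _ := by
        rw [heatMajorant, ← mul_assoc, mul_assoc _ (r ^ _), rpow_mul_sq_div_rpow hr hnorm]
        ring

theorem memLp_two_heatMajorant {t : ℝ} (ht : 0 < t) : MemLp (heatMajorant t) 2 volume := by
  have hm : Measurable (heatMajorant t) := by unfold heatMajorant; fun_prop
  rw [memLp_two_iff_integrable_sq hm.aestronglyMeasurable]
  refine (integrable_norm_rpow_mul_exp_neg_mul_sq volume (b := 1 / (4 * t)) (p := -(8 : ℝ) / 3)
    (by positivity) (by norm_num)).congr (ae_of_all _ fun u => ?_)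
  dsimp only [heatMajorant]
  rw [mul_pow, ← rpow_natCast (‖u‖ ^ _) 2, ← rpow_mul (norm_nonneg u), ← exp_nat_mul]
  congr 2
  · norm_num
  · field_simp; ring

theorem bker_nonneg (t s : ℝ) (u : ℝ³) : 0 ≤ bker t s u :=
  setIntegral_nonneg measurableSet_Ioc fun _ hr => heatKernel_nonneg hr.1.le u

theorem exists_bker_le_mul_heatMajorant {t : ℝ} (ht : 0 < t) :
    ∃ C, ∀ s, 0 ≤ s → ∀ u : ℝ³, u ≠ 0 → bker t s u ≤ C * heatMajorant t u := by
  set K := (4 * π) ^ (-(3 : ℝ) / 2) * 8 ^ ((2 : ℝ) / 3)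
  have hK : 0 ≤ K := by positivity
  refine ⟨K * ∫ r in Set.Ioc 0 t, r ^ (-(5 : ℝ) / 6), fun s hs u hu => ?_⟩
  set M := fun r : ℝ => K * r ^ (-(5 : ℝ) / 6) * heatMajorant t u
  have hsub : Set.Ioc 0 (t - s) ⊆ Set.Ioc 0 t := Set.Ioc_subset_Ioc_right (by linarith)
  have hM : IntegrableOn M (Set.Ioc 0 t) := by
    have hrpow : IntegrableOn (fun r : ℝ => r ^ (-(5 : ℝ) / 6)) (Set.Ioc 0 t) := by
      rw [← intervalIntegrable_iff_integrableOn_Ioc_of_le ht.le]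
      exact intervalIntegral.intervalIntegrable_rpow' (by norm_num)
    exact (hrpow.const_mul K).mul_const _
  have hM_nonneg : 0 ≤ᵐ[volume.restrict (Set.Ioc 0 t)] M :=
    ae_restrict_of_forall_mem measurableSet_Ioc fun r hr =>
      mul_nonneg (mul_nonneg hK (rpow_nonneg hr.1.le _)) (heatMajorant_nonneg t u)
  calc bker t s u = ∫ r in Set.Ioc 0 (t - s), heatKernel r u := rfl
    _ ≤ ∫ r in Set.Ioc 0 (t - s), M r :=
        integral_mono_of_nonneg
          (ae_restrict_of_forall_mem measurableSet_Ioc fun r hr => heatKernel_nonneg hr.1.le u)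
          (hM.mono_set hsub)
          (ae_restrict_of_forall_mem measurableSet_Ioc fun r hr =>
            heatKernel_le hr.1 (hsub hr).2 hu)
    _ ≤ ∫ r in Set.Ioc 0 t, M r := setIntegral_mono_set hM hM_nonneg hsub.eventuallyLE
    _ = K * (∫ r in Set.Ioc 0 t, r ^ (-(5 : ℝ) / 6)) * heatMajorant t u := by
        rw [integral_mul_const, integral_const_mul]

theorem measurable_bker_uncurry (t : ℝ) : Measurable fun p : ℝ × ℝ³ => bker t p.1 p.2 := by
  let S : Set ((ℝ × ℝ³) × ℝ) := {q | q.2 ∈ Set.Ioc 0 (t - q.1.1)}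
  have hS : MeasurableSet S := (measurableSet_lt measurable_const measurable_snd).inter
    (measurableSet_le measurable_snd (measurable_const.sub measurable_fst.fst))
  have hk : Measurable fun q : (ℝ × ℝ³) × ℝ => heatKernel q.2 q.1.2 := by
    unfold heatKernel; fun_prop
  convert ((hk.indicator hS).stronglyMeasurable.integral_prod_right' (ν := volume)).measurable
    using 2 with p
  change ∫ r in Set.Ioc 0 (t - p.1), heatKernel r p.2 = _
  rw [← integral_indicator measurableSet_Ioc]
  rfl

/-- For every `t > 0` and `T ≥ t`, `(s,u) ↦ b_t(s,u)` is square-integrable on `[0,T] × ℝ³`;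
in particular `∫₀^t ∫_{ℝ³} b_t(s,u)² du ds < ∞`. -/
theorem bker_memLp_two (t T : ℝ) (ht : 0 < t) (hT : t ≤ T) :
    MemLp (fun p : ℝ × EuclideanSpace ℝ (Fin 3) => bker t p.1 p.2) 2
        ((volume.restrict (Set.Icc (0 : ℝ) T)).prod volume) ∧
      (∫⁻ s in Set.Ioc (0 : ℝ) t,
          ∫⁻ u : EuclideanSpace ℝ (Fin 3), ENNReal.ofReal (bker t s u ^ 2)) < ⊤ := by
  set μ := (volume.restrict (Set.Icc (0 : ℝ) T)).prod (volume : Measure ℝ³)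
  obtain ⟨C, hC⟩ := exists_bker_le_mul_heatMajorant ht
  have hs : ∀ᵐ p ∂μ, 0 ≤ p.1 := Measure.quasiMeasurePreserving_fst.ae
    (ae_restrict_of_forall_mem measurableSet_Icc fun _ hs => hs.1)
  have hu : ∀ᵐ p ∂μ, p.2 ≠ 0 := Measure.quasiMeasurePreserving_snd.ae
    (measure_eq_zero_iff_ae_notMem.1 (measure_singleton 0))
  have hL2 : MemLp (fun p : ℝ × ℝ³ => bker t p.1 p.2) 2 μ := by
    refine (((memLp_two_heatMajorant ht).const_mul C).comp_snd _).of_le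
      (measurable_bker_uncurry t).aestronglyMeasurable ?_
    filter_upwards [hs, hu] with p hp1 hp2
    rw [norm_of_nonneg (bker_nonneg t p.1 p.2)]
    exact (hC p.1 hp1 p.2 hp2).trans (le_norm_self _)
  refine ⟨hL2, lt_of_le_of_lt ?_ hL2.integrable_sq.lintegral_lt_top⟩
  rw [lintegral_prod _ ((measurable_bker_uncurry t).pow_const 2).ennreal_ofReal.aemeasurable]
  exact lintegral_mono_set (Set.Ioc_subset_Icc_self.trans (Set.Icc_subset_Icc_right hT))
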